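/- arXiv:math/0502172 — 6 statements merged into one kernel-verified Lean document; each statement's English description precedes it below -/
import Mathlib

section
/- Let σ₀, …, σ_d be d+1 affinely independent points of ℝ^d whose pairwise distances are at most h, let f : ℝ^d → ℝ^k be L-Lipschitz, and let g : ℝ^d → ℝ^k be an affine map with g(σ_i) = f(σ_i) for every i = 0,…,d. Then for every x in the convex hull of {σ₀, …, σ_d}, ‖f(x) − g(x)‖ ≤ (4 L d / (d+1)) · h. -/
/-- Interpolation error inside one simplicial cell: if `g` is the affine interpolant of the
`L`-Lipschitz map `f` at the vertices `σ₀, …, σ_d` of a simplex of diameter at most `h`, then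
`‖f x - g x‖ ≤ 4 L d / (d+1) · h` on the convex hull of the vertices. -/
theorem interpolation_error {d k : ℕ} (h L : ℝ) (hh : 0 < h) (hL : 0 < L)
    (σ : Fin (d + 1) → EuclideanSpace ℝ (Fin d))
    (hind : AffineIndependent ℝ σ)
    (hdist : ∀ i j, dist (σ i) (σ j) ≤ h)
    (f : EuclideanSpace ℝ (Fin d) → EuclideanSpace ℝ (Fin k))
    (hf : ∀ x y, ‖f x - f y‖ ≤ L * ‖x - y‖)
    (g : EuclideanSpace ℝ (Fin d) →ᵃ[ℝ] EuclideanSpace ℝ (Fin k))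
    (hg : ∀ i, g (σ i) = f (σ i)) :
    ∀ x ∈ convexHull ℝ (Set.range σ), ‖f x - g x‖ ≤ 4 * L * d / (d + 1) * h := by
  intro x hx
  rcases Nat.eq_zero_or_pos d with hd | hd
  · -- d = 0: the space is a single point
    subst hd
    have hxs : x = σ 0 := Subsingleton.elim x (σ 0)
    rw [hxs, ← hg 0, sub_self, norm_zero]
    positivity
  rw [convexHull_range_eq_exists_affineCombination] at hx
  obtain ⟨s, w, hw0, hw1, hxw⟩ := hx
  have hxlin : x = ∑ i ∈ s, w i • σ i := by
    rw [← hxw, Finset.affineCombination_eq_linear_combination s σ w hw1]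
  -- distance from x to each vertex
  have hxdist : ∀ i, ‖x - σ i‖ ≤ h := by
    intro i
    have : x - σ i = ∑ j ∈ s, w j • (σ j - σ i) := by
      rw [hxlin]
      simp only [smul_sub, Finset.sum_sub_distrib, ← Finset.sum_smul, hw1, one_smul]
    rw [this]
    calc ‖∑ j ∈ s, w j • (σ j - σ i)‖ ≤ ∑ j ∈ s, ‖w j • (σ j - σ i)‖ := norm_sum_le _ _
      _ ≤ ∑ j ∈ s, w j * h := by
          apply Finset.sum_le_sum
          intro j hj
          rw [norm_smul, Real.norm_eq_abs, abs_of_nonneg (hw0 j hj)]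
          have := hdist j i
          rw [dist_eq_norm] at this
          exact mul_le_mul_of_nonneg_left this (hw0 j hj)
      _ = h := by rw [← Finset.sum_mul, hw1, one_mul]
  -- g x is the combination of the f-values
  have hgx : g x = ∑ i ∈ s, w i • f (σ i) := by
    rw [← hxw, Finset.map_affineCombination s σ w hw1,
      Finset.affineCombination_eq_linear_combination _ _ _ hw1]
    simp [hg]
  have hfx : f x = ∑ i ∈ s, w i • f x := by
    rw [← Finset.sum_smul, hw1, one_smul]
  have key : ‖f x - g x‖ ≤ L * h := by
    have : f x - g x = ∑ i ∈ s, w i • (f x - f (σ i)) := by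
      rw [hgx]
      nth_rewrite 1 [hfx]
      simp [smul_sub, Finset.sum_sub_distrib]
    rw [this]
    calc ‖∑ i ∈ s, w i • (f x - f (σ i))‖ ≤ ∑ i ∈ s, ‖w i • (f x - f (σ i))‖ := norm_sum_le _ _
      _ ≤ ∑ i ∈ s, w i * (L * h) := by
          apply Finset.sum_le_sum
          intro i hi
          rw [norm_smul, Real.norm_eq_abs, abs_of_nonneg (hw0 i hi)]
          refine mul_le_mul_of_nonneg_left ?_ (hw0 i hi)
          exact (hf x (σ i)).trans (mul_le_mul_of_nonneg_left (hxdist i) hL.le)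
      _ = L * h := by rw [← Finset.sum_mul, hw1, one_mul]
  refine key.trans ?_
  have hd1 : (1 : ℝ) ≤ d := by exact_mod_cast hd
  have hdd : (0:ℝ) < d + 1 := by positivity
  rw [div_mul_eq_mul_div, le_div_iff₀ hdd]
  have : L * h * (d + 1) ≤ L * h * (4 * d) := by
    apply mul_le_mul_of_nonneg_left _ (by positivity)
    linarith
  linarith [this]
end

section
/- For any two distinct permutations φ ≠ ψ of {1,…,n}, the topological interiors (in ℝⁿ) of D_{b,φ} and D_{b,ψ} are disjoint. -/
/-!
Pushing an interior point `x` a little in the direction of the coordinate `φ i` keeps it in the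
cell, so the chain of inequalities defining the cell is strict at `x`. Thus both `φ` and `ψ`
list the coordinates of `x - b` in strictly increasing order, and a strictly increasing
enumeration of a finite set is unique.
-/

/-- The Freudenthal cell `D_{b,φ} = {x : 0 ≤ x_{φ(1)} - b_{φ(1)} ≤ ⋯ ≤ x_{φ(n)} - b_{φ(n)} ≤ h}`
of the cube with corner `b` and edge length `h`, associated to the permutation `φ`. -/
def freudenthalCell {n : ℕ} (h : ℝ) (b : EuclideanSpace ℝ (Fin n)) (φ : Equiv.Perm (Fin n)) :
    Set (EuclideanSpace ℝ (Fin n)) :=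
  {x | (∀ i : Fin n, 0 ≤ x (φ i) - b (φ i) ∧ x (φ i) - b (φ i) ≤ h) ∧
    ∀ i j : Fin n, i ≤ j → x (φ i) - b (φ i) ≤ x (φ j) - b (φ j)}

theorem Equiv.Perm.eq_of_strictMono_comp {α β : Type*} [LinearOrder α] [WellFoundedLT α]
    [Preorder β] {f : α → β} {φ ψ : Equiv.Perm α} (hφ : StrictMono (f ∘ φ))
    (hψ : StrictMono (f ∘ ψ)) : φ = ψ := by
  have hcomp : f ∘ φ = f ∘ ψ := by
    rw [← hφ.range_inj hψ, Set.range_comp, Set.range_comp, φ.range_eq_univ, ψ.range_eq_univ]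
  have hf : Function.Injective f := by
    simpa [Function.comp_assoc] using hφ.injective.comp φ.symm.injective
  exact Equiv.ext fun a => hf (congrFun hcomp a)

theorem exists_pos_add_smul_mem_of_mem_interior {E : Type*} [AddCommGroup E] [TopologicalSpace E]
    [ContinuousAdd E] [Module ℝ E] [ContinuousSMul ℝ E] {s : Set E} {x : E}
    (hx : x ∈ interior s) (v : E) : ∃ t > (0 : ℝ), x + t • v ∈ s := by
  have hcont : Continuous fun t : ℝ => x + t • v := by fun_prop
  have hnhds : ∀ᶠ t in nhds (0 : ℝ), x + t • v ∈ s :=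
    hcont.continuousAt.preimage_mem_nhds (by simpa using mem_interior_iff_mem_nhds.1 hx)
  exact (eventually_nhdsWithin_of_forall (fun t ht => ht) |>.and
    (eventually_nhdsWithin_of_eventually_nhds hnhds (s := Set.Ioi 0))).exists

theorem strictMono_of_mem_interior_freudenthalCell {n : ℕ} {h : ℝ}
    {b x : EuclideanSpace ℝ (Fin n)} {φ : Equiv.Perm (Fin n)}
    (hx : x ∈ interior (freudenthalCell h b φ)) :
    StrictMono fun i => x (φ i) - b (φ i) := by
  intro i j hij
  obtain ⟨t, ht, hmem⟩ :=
    exists_pos_add_smul_mem_of_mem_interior hx (EuclideanSpace.single (φ i) 1)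
  have hφij : φ j ≠ φ i := φ.injective.ne hij.ne'
  have hle : x (φ i) + t - b (φ i) ≤ x (φ j) - b (φ j) := by
    simpa [hφij] using hmem.2 i j hij.le
  linarith

theorem freudenthalCell_interior_disjoint_general {n : ℕ} (h : ℝ)
    (b : EuclideanSpace ℝ (Fin n)) (φ ψ : Equiv.Perm (Fin n)) (hne : φ ≠ ψ) :
    interior (freudenthalCell h b φ) ∩ interior (freudenthalCell h b ψ) = ∅ :=
  Set.eq_empty_iff_forall_notMem.2 fun x ⟨hxφ, hxψ⟩ => hne <|
    Equiv.Perm.eq_of_strictMono_comp (f := fun k => x k - b k)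
      (strictMono_of_mem_interior_freudenthalCell hxφ)
      (strictMono_of_mem_interior_freudenthalCell hxψ)

/-- Distinct Freudenthal cells of the same cube have disjoint topological interiors. -/
theorem freudenthalCell_interior_disjoint {n : ℕ} (hn : 1 ≤ n) (h : ℝ) (hh : 0 < h)
    (b : EuclideanSpace ℝ (Fin n)) (φ ψ : Equiv.Perm (Fin n)) (hne : φ ≠ ψ) :
    interior (freudenthalCell h b φ) ∩ interior (freudenthalCell h b ψ) = ∅ :=
  freudenthalCell_interior_disjoint_general h b φ ψ hne
end

section
/- For every permutation φ of {1,…,n}, the Euclidean diameter of the set D_{b,φ} equals √n · h. -/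
/-! The cell lies in the cube `b + [0, h]ⁿ` and contains both ends `b` and `b + (h, …, h)` of its
main diagonal, whose length `√n · h` is the diameter of the cube. -/

namespace EuclideanSpace

variable {ι : Type*} [Fintype ι] {x y : EuclideanSpace ℝ ι} {c : ℝ}

theorem dist_le_sqrt_card_mul (hc : 0 ≤ c) (h : ∀ i, dist (x i) (y i) ≤ c) :
    dist x y ≤ √(Fintype.card ι) * c :=
  calc dist x y = √(∑ i, dist (x i) (y i) ^ 2) := EuclideanSpace.dist_eq x y
    _ ≤ √(∑ _i : ι, c ^ 2) := by gcongr with i; exact h i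
    _ = √(Fintype.card ι) * c := by simp [Real.sqrt_mul, Real.sqrt_sq hc]

theorem dist_eq_sqrt_card_mul (hc : 0 ≤ c) (h : ∀ i, dist (x i) (y i) = c) :
    dist x y = √(Fintype.card ι) * c := by
  simp [EuclideanSpace.dist_eq, h, Real.sqrt_mul, Real.sqrt_sq hc]

end EuclideanSpace

namespace freudenthalCell

variable {n : ℕ} {h : ℝ} {b x y : EuclideanSpace ℝ (Fin n)} {φ : Equiv.Perm (Fin n)}

theorem sub_mem_Icc (hx : x ∈ freudenthalCell h b φ) (i : Fin n) : x i - b i ∈ Set.Icc 0 h := by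
  obtain ⟨j, rfl⟩ := φ.surjective i
  exact hx.1 j

theorem dist_apply_le (hx : x ∈ freudenthalCell h b φ) (hy : y ∈ freudenthalCell h b φ)
    (i : Fin n) : dist (x i) (y i) ≤ h := by
  obtain ⟨hx₀, hxh⟩ := sub_mem_Icc hx i
  obtain ⟨hy₀, hyh⟩ := sub_mem_Icc hy i
  rw [Real.dist_eq, abs_sub_le_iff]
  constructor <;> linarith

theorem dist_le (hh : 0 ≤ h) (hx : x ∈ freudenthalCell h b φ)
    (hy : y ∈ freudenthalCell h b φ) : dist x y ≤ √n * h := by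
  simpa using EuclideanSpace.dist_le_sqrt_card_mul hh (dist_apply_le hx hy)

theorem diagonal_mem {t : ℝ} (ht₀ : 0 ≤ t) (hth : t ≤ h) :
    WithLp.toLp 2 (fun i => b i + t) ∈ freudenthalCell h b φ :=
  ⟨fun _ => by simp [ht₀, hth], fun _ _ _ => by simp⟩

end freudenthalCell

theorem freudenthalCell_diam_general {n : ℕ} (h : ℝ) (hh : 0 < h)
    (b : EuclideanSpace ℝ (Fin n)) (φ : Equiv.Perm (Fin n)) :
    Metric.diam (freudenthalCell h b φ) = Real.sqrt n * h := by
  have hdist : ∀ x ∈ freudenthalCell h b φ, ∀ y ∈ freudenthalCell h b φ, dist x y ≤ √n * h :=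
    fun _ hx _ hy => freudenthalCell.dist_le hh.le hx hy
  refine le_antisymm (Metric.diam_le_of_forall_dist_le (by positivity) hdist) ?_
  have hdiag : dist (WithLp.toLp 2 (fun i => b i + 0) : EuclideanSpace ℝ (Fin n))
      (WithLp.toLp 2 (fun i => b i + h)) = √n * h := by
    simpa using EuclideanSpace.dist_eq_sqrt_card_mul (ι := Fin n) hh.le
      (fun i => by simp [abs_of_pos hh])
  rw [← hdiag]
  exact Metric.dist_le_diam_of_mem (Metric.isBounded_iff.2 ⟨_, hdist⟩)
    (freudenthalCell.diagonal_mem le_rfl hh.le) (freudenthalCell.diagonal_mem hh.le le_rfl)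

/-- The Euclidean diameter of each Freudenthal cell is `√n · h`. -/
theorem freudenthalCell_diam {n : ℕ} (hn : 1 ≤ n) (h : ℝ) (hh : 0 < h)
    (b : EuclideanSpace ℝ (Fin n)) (φ : Equiv.Perm (Fin n)) :
    Metric.diam (freudenthalCell h b φ) = Real.sqrt n * h :=
  freudenthalCell_diam_general h hh b φ
end

section
/- The family of sets D_{hk,φ}, indexed by k ∈ ℤⁿ and permutations φ of {1,…,n}, covers ℝⁿ: every x ∈ ℝⁿ belongs to some D_{hk,φ}. Moreover any two distinct members of this family have disjoint topological interiors. -/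
/-!
Writing `x = hk + y` with `y ∈ [0, h)ⁿ` (coordinatewise reduction modulo `h`) and choosing `φ`
to sort the coordinates of `y` shows that the cells cover `ℝⁿ`. A point in the interior of a
cell satisfies every defining inequality strictly, since otherwise a small move along a
coordinate direction leaves the cell. Then `y ∈ (0, h)ⁿ` pins down `k`, and the strict ordering
of the pairwise distinct coordinates of `y` pins down `φ` as the sorting permutation.
-/

open Filter Topology

theorem lt_of_mem_interior_setOf_le {E : Type*} [TopologicalSpace E] [AddCommGroup E]
    [Module ℝ E] [ContinuousAdd E] [ContinuousSMul ℝ E] {f : E → ℝ} {v : E}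
    (hf : ∀ x (t : ℝ), f (x + t • v) = f x + t) {c : ℝ} {x : E}
    (hx : x ∈ interior {y | f y ≤ c}) : f x < c := by
  have hline : Tendsto (fun t : ℝ => x + t • v) (𝓝[>] 0) (𝓝 x) := by
    have := (continuous_const.add (continuous_id.smul continuous_const)).tendsto' 0 x
      (by simp : x + (0 : ℝ) • v = x)
    exact this.mono_left nhdsWithin_le_nhds
  obtain ⟨t, hle, ht⟩ :=
    ((hline.eventually (mem_interior_iff_mem_nhds.mp hx)).and self_mem_nhdsWithin).exists
  simp only [hf] at hle
  linarith [show 0 < t from ht]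

theorem sub_mul_mem_Ico_iff_toIcoDiv_eq {h : ℝ} (hh : 0 < h) (a : ℝ) (k : ℤ) :
    a - h * k ∈ Set.Ico 0 h ↔ toIcoDiv hh 0 a = k := by
  rw [toIcoDiv_eq_iff, zsmul_eq_mul, mul_comm, zero_add]

namespace freudenthalCell

variable {n : ℕ} {h : ℝ} {b x : EuclideanSpace ℝ (Fin n)} {φ : Equiv.Perm (Fin n)}

theorem mem_sort (hx : ∀ i, x i - b i ∈ Set.Icc 0 h) :
    x ∈ freudenthalCell h b (Tuple.sort fun i => x i - b i) :=
  ⟨fun _ => hx _, fun _ _ hij => Tuple.monotone_sort (fun i => x i - b i) hij⟩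

theorem mem_Ioo_of_mem_interior (hx : x ∈ interior (freudenthalCell h b φ)) (i : Fin n) :
    x i - b i ∈ Set.Ioo 0 h := by
  obtain ⟨j, rfl⟩ := φ.surjective i
  have hlow : freudenthalCell h b φ ⊆ {y | -(y (φ j) - b (φ j)) ≤ 0} :=
    fun y hy => neg_nonpos.mpr (hy.1 j).1
  have hhigh : freudenthalCell h b φ ⊆ {y | y (φ j) - b (φ j) ≤ h} := fun y hy => (hy.1 j).2
  have hpos := lt_of_mem_interior_setOf_le (v := EuclideanSpace.single (φ j) (-1))
    (fun y t => by
      simp only [PiLp.add_apply, PiLp.smul_apply, PiLp.single_eq_same, smul_eq_mul]; ring)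
    (interior_mono hlow hx)
  refine ⟨neg_neg_iff_pos.mp hpos, ?_⟩
  exact lt_of_mem_interior_setOf_le (v := EuclideanSpace.single (φ j) 1)
    (fun y t => by
      simp only [PiLp.add_apply, PiLp.smul_apply, PiLp.single_eq_same, smul_eq_mul]; ring)
    (interior_mono hhigh hx)

theorem strictMono_of_mem_interior (hx : x ∈ interior (freudenthalCell h b φ)) :
    StrictMono fun i => x (φ i) - b (φ i) := by
  intro i j hij
  have hne : φ i ≠ φ j := φ.injective.ne hij.ne
  have hsub :
      freudenthalCell h b φ ⊆ {y | (y (φ i) - b (φ i)) - (y (φ j) - b (φ j)) ≤ 0} :=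
    fun y hy => sub_nonpos.mpr (hy.2 i j hij.le)
  refine sub_neg.mp (lt_of_mem_interior_setOf_le (v := EuclideanSpace.single (φ i) 1)
    (fun y t => ?_) (interior_mono hsub hx))
  simp only [PiLp.add_apply, PiLp.smul_apply, PiLp.single_eq_same, PiLp.single_eq_of_ne' _ hne,
    smul_eq_mul]
  ring

theorem eq_sort_of_mem_interior (hx : x ∈ interior (freudenthalCell h b φ)) :
    φ = Tuple.sort fun i => x i - b i :=
  Tuple.eq_sort_iff.mpr ⟨(strictMono_of_mem_interior hx).monotone,
    fun _ _ hij heq => absurd heq (strictMono_of_mem_interior hx hij).ne⟩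

end freudenthalCell

theorem freudenthal_mesh_of_space_general {n : ℕ} (h : ℝ) (hh : 0 < h) :
    (∀ x : EuclideanSpace ℝ (Fin n), ∃ (k : Fin n → ℤ) (φ : Equiv.Perm (Fin n)),
      x ∈ freudenthalCell h (WithLp.toLp 2 (fun i => h * (k i : ℝ)) : EuclideanSpace ℝ (Fin n)) φ) ∧
    (∀ (k k' : Fin n → ℤ) (φ φ' : Equiv.Perm (Fin n)), (k, φ) ≠ (k', φ') →
      interior (freudenthalCell h (WithLp.toLp 2 (fun i => h * (k i : ℝ)) : EuclideanSpace ℝ (Fin n)) φ) ∩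
        interior (freudenthalCell h (WithLp.toLp 2 (fun i => h * (k' i : ℝ)) : EuclideanSpace ℝ (Fin n)) φ')
        = ∅) := by
  constructor
  · intro x
    exact ⟨fun i => toIcoDiv hh 0 (x i), _, freudenthalCell.mem_sort fun i =>
      Set.Ico_subset_Icc_self ((sub_mul_mem_Ico_iff_toIcoDiv_eq hh (x i) _).mpr rfl)⟩
  · intro k k' φ φ' hne
    refine Set.eq_empty_iff_forall_notMem.mpr fun x ⟨hx, hx'⟩ => hne ?_
    have hk : k = k' := funext fun i => by
      rw [← (sub_mul_mem_Ico_iff_toIcoDiv_eq hh (x i) (k i)).mp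
          (Set.Ioo_subset_Ico_self (freudenthalCell.mem_Ioo_of_mem_interior hx i)),
        ← (sub_mul_mem_Ico_iff_toIcoDiv_eq hh (x i) (k' i)).mp
          (Set.Ioo_subset_Ico_self (freudenthalCell.mem_Ioo_of_mem_interior hx' i))]
    subst hk
    rw [freudenthalCell.eq_sort_of_mem_interior hx, freudenthalCell.eq_sort_of_mem_interior hx']

/-- The family `(D_{hk,φ})_{k ∈ ℤⁿ, φ ∈ Sₙ}` is a simplicial mesh of `ℝⁿ`: it covers the
whole space and any two distinct members have disjoint topological interiors. -/
theorem freudenthal_mesh_of_space {n : ℕ} (hn : 1 ≤ n) (h : ℝ) (hh : 0 < h) :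
    (∀ x : EuclideanSpace ℝ (Fin n), ∃ (k : Fin n → ℤ) (φ : Equiv.Perm (Fin n)),
      x ∈ freudenthalCell h (WithLp.toLp 2 (fun i => h * (k i : ℝ)) : EuclideanSpace ℝ (Fin n)) φ) ∧
    (∀ (k k' : Fin n → ℤ) (φ φ' : Equiv.Perm (Fin n)), (k, φ) ≠ (k', φ') →
      interior (freudenthalCell h (WithLp.toLp 2 (fun i => h * (k i : ℝ)) : EuclideanSpace ℝ (Fin n)) φ) ∩
        interior (freudenthalCell h (WithLp.toLp 2 (fun i => h * (k' i : ℝ)) : EuclideanSpace ℝ (Fin n)) φ')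
        = ∅) :=
  freudenthal_mesh_of_space_general h hh
end

section
/- Let U ⊆ ℝᵐ be a compact set, T > 0, T_f ⊆ ℝⁿ a nonempty set, and let f, g : ℝⁿ × ℝᵐ → ℝⁿ be continuous maps that are both L-Lipschitz in their first argument uniformly in the second (L > 0), and satisfy ‖f(x,u) − g(x,u)‖ ≤ ε for all x ∈ ℝⁿ, u ∈ U. For a dynamic F ∈ {f, g}, define the controllable domain in time ≤ T as C_F = {x₀ ∈ ℝⁿ : ∃ T' ∈ [0,T], ∃ measurable u : ℝ → U, ∃ continuous X : [0,T'] → ℝⁿ with X(t) = x₀ + ∫₀ᵗ F(X(s), u(s)) ds for all t ∈ [0,T'] and X(T') ∈ T_f}. Then the Hausdorff distance between C_f and C_g is at most (ε/L)(e^{LT} − 1). -/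
/-!
Take an `f`-trajectory `X` from `x₀` that reaches the target at time `T'` under the control `u`.
Keep the control and solve the `g`-equation backwards from the same endpoint `X(T')` by Picard
iteration started at `X`. The first iterate moves `X` by at most `ε (T' - t)` at time `t`, and
by the Lipschitz bound the `k`-th increment is at most `ε L^k (T' - t)^(k+1) / (k+1)!`, so the
limit `Y` (which exists because some iterate of the Picard operator is a contraction) is a
`g`-trajectory to the target with `‖X 0 - Y 0‖ ≤ ε / L (e^{L T'} - 1)`. Exchanging `f` and `g`
bounds the Hausdorff distance.
-/

open MeasureTheory

/-- The controllable domain in time at most `T` to the target `Tf`, for the controlled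
dynamic `F` with controls taking values in `U`: the set of initial points `x₀` from which
some trajectory `X(t) = x₀ + ∫₀ᵗ F(X(s), u(s)) ds`, driven by a measurable control `u`
with values in `U`, reaches `Tf` at some time `T' ∈ [0, T]`. -/
def ctrlDomainWithin (n m : ℕ) (U : Set (EuclideanSpace ℝ (Fin m))) (T : ℝ)
    (Tf : Set (EuclideanSpace ℝ (Fin n)))
    (F : EuclideanSpace ℝ (Fin n) → EuclideanSpace ℝ (Fin m) → EuclideanSpace ℝ (Fin n)) :
    Set (EuclideanSpace ℝ (Fin n)) :=
  {x₀ | ∃ T' ∈ Set.Icc (0 : ℝ) T, ∃ u : ℝ → EuclideanSpace ℝ (Fin m),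
    Measurable u ∧ (∀ s, u s ∈ U) ∧
    ∃ X : ℝ → EuclideanSpace ℝ (Fin n), ContinuousOn X (Set.Icc 0 T') ∧
      (∀ t ∈ Set.Icc (0 : ℝ) T', X t = x₀ + ∫ s in (0 : ℝ)..t, F (X s) (u s)) ∧
      X T' ∈ Tf}

open Set Filter Topology

theorem integral_sub_pow_div_factorial (t b : ℝ) (j : ℕ) :
    ∫ s in t..b, (b - s) ^ j / j.factorial = (b - t) ^ (j + 1) / (j + 1).factorial := by
  rw [intervalIntegral.integral_comp_sub_left (fun x => x ^ j / j.factorial), sub_self,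
    intervalIntegral.integral_div, integral_pow, Nat.factorial_succ]
  push_cast
  field_simp
  ring

theorem sum_pow_succ_div_factorial_le {x : ℝ} (hx : 0 ≤ x) (M : ℕ) :
    ∑ k ∈ Finset.range M, x ^ (k + 1) / (k + 1).factorial ≤ Real.exp x - 1 := by
  have := Real.sum_le_exp_of_nonneg hx (M + 1)
  rw [Finset.sum_range_succ'] at this
  simp only [pow_zero, Nat.factorial_zero, Nat.cast_one, div_one] at this
  linarith

section Volterra

variable {E : Type*} [NormedAddCommGroup E] {a b : ℝ}

/-- The estimate satisfied by the Picard operator of an `L`-Lipschitz equation solved backwards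
from `b`. -/
def IsBackwardVolterra (L : ℝ) (Φ : C(Icc a b, E) → C(Icc a b, E)) : Prop :=
  ∀ (A B : C(Icc a b, E)) (φ : ℝ → ℝ), Continuous φ → (∀ s : Icc a b, ‖A s - B s‖ ≤ φ s) →
    ∀ t : Icc a b, ‖Φ A t - Φ B t‖ ≤ L * ∫ s in t..b, φ s

namespace IsBackwardVolterra

variable {L : ℝ} {Φ : C(Icc a b, E) → C(Icc a b, E)}

theorem norm_iterate_sub_le (hΦ : IsBackwardVolterra L Φ) {A B : C(Icc a b, E)} {C : ℝ}
    {j : ℕ} (hAB : ∀ s : Icc a b, ‖A s - B s‖ ≤ C * (b - s) ^ j / j.factorial) (k : ℕ)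
    (t : Icc a b) :
    ‖(Φ^[k] A) t - (Φ^[k] B) t‖ ≤ C * L ^ k * (b - t) ^ (j + k) / (j + k).factorial := by
  induction k generalizing t with
  | zero => simpa using hAB t
  | succ k ih =>
    rw [Function.iterate_succ_apply', Function.iterate_succ_apply']
    refine (hΦ _ _ (fun s => C * L ^ k * (b - s) ^ (j + k) / (j + k).factorial)
      (by fun_prop) ih t).trans_eq ?_
    simp_rw [mul_div_assoc]
    rw [intervalIntegral.integral_const_mul, integral_sub_pow_div_factorial, ← add_assoc]
    ring

theorem dist_iterate_le (hΦ : IsBackwardVolterra L Φ) (hL : 0 ≤ L) (hab : a ≤ b)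
    (A B : C(Icc a b, E)) (k : ℕ) :
    dist (Φ^[k] A) (Φ^[k] B) ≤ (L * (b - a)) ^ k / k.factorial * dist A B := by
  have hb : 0 ≤ b - a := sub_nonneg.2 hab
  refine (ContinuousMap.dist_le (by positivity)).2 fun t => ?_
  have hAB (s : Icc a b) : ‖A s - B s‖ ≤ dist A B * (b - s) ^ 0 / (0).factorial := by
    simpa [← dist_eq_norm] using ContinuousMap.dist_apply_le_dist s
  have hbt : (b - t) ^ k ≤ (b - a) ^ k :=
    pow_le_pow_left₀ (sub_nonneg.2 t.2.2) (by linarith [t.2.1]) k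
  rw [dist_eq_norm]
  refine (hΦ.norm_iterate_sub_le hAB k t).trans ?_
  rw [zero_add, mul_pow]
  calc dist A B * L ^ k * (b - t) ^ k / k.factorial
      ≤ dist A B * L ^ k * (b - a) ^ k / k.factorial := by gcongr
    _ = _ := by ring

theorem exists_contractingWith_iterate (hΦ : IsBackwardVolterra L Φ) (hL : 0 ≤ L)
    (hab : a ≤ b) : ∃ (N : ℕ) (K : NNReal), ContractingWith K Φ^[N] := by
  obtain ⟨N, hN⟩ := ((FloorSemiring.tendsto_pow_div_factorial_atTop (L * (b - a))).eventually
    (gt_mem_nhds one_pos)).exists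
  have hK : 0 ≤ (L * (b - a)) ^ N / N.factorial := by
    have := sub_nonneg.2 hab
    positivity
  exact ⟨N, ⟨_, hK⟩, hN, .of_dist_le_mul (hΦ.dist_iterate_le hL hab · · N)⟩

theorem norm_sub_iterate_le (hΦ : IsBackwardVolterra L Φ) (hL : 0 < L) {ε : ℝ} (hε : 0 ≤ ε)
    {X : C(Icc a b, E)} (hX : ∀ t : Icc a b, ‖Φ X t - X t‖ ≤ ε * (b - t)) (M : ℕ)
    (t : Icc a b) : ‖X t - (Φ^[M] X) t‖ ≤ ε / L * (Real.exp (L * (b - t)) - 1) := by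
  have hstep (k : ℕ) : ‖(Φ^[k] X) t - (Φ^[k + 1] X) t‖ ≤
      ε / L * ((L * (b - t)) ^ (k + 1) / (k + 1).factorial) := by
    have hX' (s : Icc a b) : ‖Φ X s - X s‖ ≤ ε * (b - s) ^ 1 / (1).factorial := by
      simpa using hX s
    rw [norm_sub_rev, Function.iterate_succ_apply, add_comm k 1]
    refine (hΦ.norm_iterate_sub_le hX' k t).trans_eq ?_
    rw [mul_pow]
    field_simp
    ring
  calc ‖X t - (Φ^[M] X) t‖
      ≤ ∑ k ∈ Finset.range M, ‖(Φ^[k] X) t - (Φ^[k + 1] X) t‖ := by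
        simpa only [dist_eq_norm, Function.iterate_zero, id] using
          dist_le_range_sum_dist (fun k => (Φ^[k] X) t) M
    _ ≤ ∑ k ∈ Finset.range M, ε / L * ((L * (b - t)) ^ (k + 1) / (k + 1).factorial) :=
        Finset.sum_le_sum fun k _ => hstep k
    _ ≤ ε / L * (Real.exp (L * (b - t)) - 1) := by
        rw [← Finset.mul_sum]
        exact mul_le_mul_of_nonneg_left
          (sum_pow_succ_div_factorial_le (mul_nonneg hL.le (sub_nonneg.2 t.2.2)) M)
          (div_nonneg hε hL.le)

theorem exists_fixedPoint_norm_sub_le [CompleteSpace E] (hΦ : IsBackwardVolterra L Φ)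
    (hL : 0 < L) {ε : ℝ} (hε : 0 ≤ ε) (hab : a ≤ b) {X : C(Icc a b, E)}
    (hX : ∀ t : Icc a b, ‖Φ X t - X t‖ ≤ ε * (b - t)) :
    ∃ Y, Φ Y = Y ∧ ∀ t : Icc a b, ‖X t - Y t‖ ≤ ε / L * (Real.exp (L * (b - t)) - 1) := by
  obtain ⟨N, K, hK⟩ := hΦ.exists_contractingWith_iterate hL.le hab
  have : Nonempty C(Icc a b, E) := ⟨X⟩
  refine ⟨_, hK.isFixedPt_fixedPoint_iterate, fun t => ?_⟩
  have hlim : Tendsto (fun k => ‖X t - ((Φ^[N])^[k] X) t‖) atTop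
      (𝓝 ‖X t - hK.fixedPoint _ t‖) :=
    ((continuous_const.sub (continuous_eval_const t)).norm.tendsto _).comp
      (hK.tendsto_iterate_fixedPoint X)
  refine le_of_tendsto' hlim fun k => ?_
  rw [← Function.iterate_mul]
  exact hΦ.norm_sub_iterate_le hL hε hX _ t

end IsBackwardVolterra

end Volterra

section BackwardPicard

variable {E V : Type*} [NormedAddCommGroup E]

theorem intervalIntegrable_comp_of_isCompact [TopologicalSpace V] {F : E → V → E}
    (hF : Continuous fun p : E × V => F p.1 p.2) {K : Set V} (hK : IsCompact K)
    {u : ℝ → V} (hu : AEStronglyMeasurable u) (huK : ∀ s, u s ∈ K) {Z : ℝ → E} {x y : ℝ}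
    (hZ : ContinuousOn Z (uIcc x y)) :
    IntervalIntegrable (fun s => F (Z s) (u s)) volume x y := by
  obtain ⟨C, hC⟩ := ((isCompact_uIcc.image_of_continuousOn hZ).prod hK)
    |>.exists_bound_of_continuousOn hF.continuousOn
  have hZm : AEStronglyMeasurable Z (volume.restrict (uIoc x y)) :=
    (hZ.aestronglyMeasurable measurableSet_uIcc).mono_measure
      (Measure.restrict_mono uIoc_subset_uIcc le_rfl)
  refine (intervalIntegrable_const (c := C)).mono_fun'
    (hF.comp_aestronglyMeasurable (hZm.prodMk hu.restrict)) ?_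
  filter_upwards [ae_restrict_mem measurableSet_uIoc] with s hs
  exact hC (Z s, u s) ⟨mem_image_of_mem Z (uIoc_subset_uIcc hs), huK s⟩

variable [NormedSpace ℝ E] {a b : ℝ} (hab : a ≤ b) (F : E → V → E) (u : ℝ → V) (c : E)
  (hint : ∀ (Y : C(Icc a b, E)) (x y : ℝ),
    IntervalIntegrable (fun s => F (IccExtend hab Y s) (u s)) volume x y)

noncomputable def backwardPicard (Y : C(Icc a b, E)) : C(Icc a b, E) :=
  ⟨fun t => c + ∫ s in b..t, F (IccExtend hab Y s) (u s),
    continuous_const.add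
      ((intervalIntegral.continuous_primitive (hint Y) b).comp continuous_subtype_val)⟩

theorem backwardPicard_apply (Y : C(Icc a b, E)) (t : Icc a b) :
    backwardPicard hab F u c hint Y t = c + ∫ s in b..t, F (IccExtend hab Y s) (u s) :=
  rfl

variable {hab F u c hint}

theorem isBackwardVolterra_backwardPicard {L : ℝ} (hL : 0 ≤ L)
    (hFLip : ∀ x y v, ‖F x v - F y v‖ ≤ L * ‖x - y‖) :
    IsBackwardVolterra L (backwardPicard hab F u c hint) := by
  intro A B φ hφ hAB t
  rw [backwardPicard_apply, backwardPicard_apply, add_sub_add_left_eq_sub,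
    ← intervalIntegral.integral_sub (hint A b t) (hint B b t), intervalIntegral.integral_symm,
    norm_neg, ← intervalIntegral.integral_const_mul]
  refine intervalIntegral.norm_integral_le_of_norm_le t.2.2 (ae_of_all _ fun s hs => ?_)
    ((hφ.intervalIntegrable t b).const_mul L)
  have hs' : s ∈ Icc a b := ⟨t.2.1.trans hs.1.le, hs.2⟩
  rw [IccExtend_of_mem hab A hs', IccExtend_of_mem hab B hs']
  exact (hFLip _ _ _).trans (mul_le_mul_of_nonneg_left (hAB ⟨s, hs'⟩) hL)

theorem norm_backwardPicard_sub_le {G : E → V → E} {ε : ℝ}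
    (hFG : ∀ x s, ‖F x (u s) - G x (u s)‖ ≤ ε) {X : C(Icc a b, E)}
    (hGint : IntervalIntegrable (fun s => G (IccExtend hab X s) (u s)) volume a b)
    (hX : ∀ t ∈ Icc a b,
      IccExtend hab X t = IccExtend hab X a + ∫ s in a..t, G (IccExtend hab X s) (u s))
    (t : Icc a b) :
    ‖backwardPicard hab F u (IccExtend hab X b) hint X t - X t‖ ≤ ε * (b - t) := by
  have ht : (t : ℝ) ∈ uIcc a b := Icc_subset_uIcc t.2
  have hXt : X t = IccExtend hab X b + ∫ s in b..t, G (IccExtend hab X s) (u s) := by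
    rw [← IccExtend_val hab X t, hX t t.2, hX b (right_mem_Icc.2 hab), add_assoc,
      ← intervalIntegral.integral_interval_sub_left
        (hGint.mono_set (uIcc_subset_uIcc left_mem_uIcc ht)) hGint]
    abel
  rw [backwardPicard_apply, hXt, add_sub_add_left_eq_sub,
    ← intervalIntegral.integral_sub (hint X b t)
    (hGint.mono_set (uIcc_subset_uIcc right_mem_uIcc ht))]
  refine (intervalIntegral.norm_integral_le_of_norm_le_const fun s _ => hFG _ s).trans_eq ?_
  rw [abs_sub_comm, abs_of_nonneg (sub_nonneg.2 t.2.2)]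

theorem IccExtend_eq_of_backwardPicard_eq_self {Y : C(Icc a b, E)}
    (hY : backwardPicard hab F u c hint Y = Y) :
    (∀ t ∈ Icc a b,
      IccExtend hab Y t = IccExtend hab Y a + ∫ s in a..t, F (IccExtend hab Y s) (u s)) ∧
    IccExtend hab Y b = c := by
  have hYt (t : ℝ) (ht : t ∈ Icc a b) :
      IccExtend hab Y t = c + ∫ s in b..t, F (IccExtend hab Y s) (u s) := by
    rw [IccExtend_of_mem hab Y ht, ← backwardPicard_apply hab F u c hint Y ⟨t, ht⟩, hY]
  refine ⟨fun t ht => ?_, by simpa using hYt b (right_mem_Icc.2 hab)⟩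
  rw [hYt t ht, hYt a (left_mem_Icc.2 hab), add_assoc,
    ← intervalIntegral.integral_interval_sub_left (hint Y b t) (hint Y b a)]
  abel

end BackwardPicard

theorem exists_mem_ctrlDomainWithin_dist_le {n m : ℕ} {U : Set (EuclideanSpace ℝ (Fin m))}
    (hU : IsCompact U) {T L ε : ℝ} (hL : 0 < L) (hε : 0 ≤ ε)
    {Tf : Set (EuclideanSpace ℝ (Fin n))}
    {f g : EuclideanSpace ℝ (Fin n) → EuclideanSpace ℝ (Fin m) → EuclideanSpace ℝ (Fin n)}
    (hfc : Continuous fun p : EuclideanSpace ℝ (Fin n) × EuclideanSpace ℝ (Fin m) => f p.1 p.2)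
    (hgc : Continuous fun p : EuclideanSpace ℝ (Fin n) × EuclideanSpace ℝ (Fin m) => g p.1 p.2)
    (hgLip : ∀ x y v, ‖g x v - g y v‖ ≤ L * ‖x - y‖) (hfg : ∀ x, ∀ v ∈ U, ‖f x v - g x v‖ ≤ ε)
    {x₀ : EuclideanSpace ℝ (Fin n)} (hx₀ : x₀ ∈ ctrlDomainWithin n m U T Tf f) :
    ∃ y₀ ∈ ctrlDomainWithin n m U T Tf g, dist x₀ y₀ ≤ ε / L * (Real.exp (L * T) - 1) := by
  obtain ⟨T', hT', u, hu, huU, X, hXc, hX, hXT⟩ := hx₀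
  have h0 : (0 : ℝ) ≤ T' := hT'.1
  let Xc : C(Icc 0 T', EuclideanSpace ℝ (Fin n)) :=
    ContinuousMap.mk (fun t => X t) hXc.domRestrict
  have hXe {t : ℝ} (ht : t ∈ Icc 0 T') : IccExtend h0 Xc t = X t := IccExtend_of_mem h0 Xc ht
  have hXtraj (t : ℝ) (ht : t ∈ Icc 0 T') : IccExtend h0 Xc t =
      IccExtend h0 Xc 0 + ∫ s in 0..t, f (IccExtend h0 Xc s) (u s) := by
    rw [hXe ht, hXe (left_mem_Icc.2 h0), hX t ht, hX 0 (left_mem_Icc.2 h0),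
      intervalIntegral.integral_same, add_zero]
    refine congrArg _ (intervalIntegral.integral_congr fun s hs => ?_)
    rw [uIcc_of_le ht.1] at hs
    simp only [hXe ⟨hs.1, hs.2.trans ht.2⟩]
  have hint {F : _ → _ → EuclideanSpace ℝ (Fin n)}
      (hF : Continuous fun p : EuclideanSpace ℝ (Fin n) × EuclideanSpace ℝ (Fin m) => F p.1 p.2)
      (Y : C(Icc 0 T', EuclideanSpace ℝ (Fin n))) (x y : ℝ) :
      IntervalIntegrable (fun s => F (IccExtend h0 Y s) (u s)) volume x y :=
    intervalIntegrable_comp_of_isCompact hF hU hu.aestronglyMeasurable huU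
      (continuous_IccExtend_iff.2 Y.continuous).continuousOn
  have hfirst := norm_backwardPicard_sub_le (hint := hint hgc)
    (fun x s => norm_sub_rev (f x (u s)) _ ▸ hfg x (u s) (huU s)) (hint hfc Xc 0 T') hXtraj
  obtain ⟨Y, hY, hXY⟩ := (isBackwardVolterra_backwardPicard hL.le hgLip)
    |>.exists_fixedPoint_norm_sub_le hL hε h0 hfirst
  obtain ⟨hYtraj, hYT⟩ := IccExtend_eq_of_backwardPicard_eq_self hY
  refine ⟨IccExtend h0 Y 0, ⟨T', hT', u, hu, huU, IccExtend h0 Y,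
    (continuous_IccExtend_iff.2 Y.continuous).continuousOn, hYtraj,
    hYT ▸ hXe (right_mem_Icc.2 h0) ▸ hXT⟩, ?_⟩
  have hexp : Real.exp (L * (T' - 0)) ≤ Real.exp (L * T) := by
    gcongr
    linarith [hT'.2]
  have hx₀ : Xc ⟨0, left_mem_Icc.2 h0⟩ = x₀ := by
    change X 0 = x₀
    simpa using hX 0 (left_mem_Icc.2 h0)
  calc dist x₀ (IccExtend h0 Y 0)
      = ‖Xc ⟨0, left_mem_Icc.2 h0⟩ - Y ⟨0, left_mem_Icc.2 h0⟩‖ := by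
        rw [dist_eq_norm, IccExtend_left, hx₀]
    _ ≤ ε / L * (Real.exp (L * (T' - 0)) - 1) := hXY _
    _ ≤ ε / L * (Real.exp (L * T) - 1) := by gcongr

theorem hausdorffDist_ctrlDomain_le_general {n m : ℕ} (U : Set (EuclideanSpace ℝ (Fin m)))
    (hU : IsCompact U) (T L ε : ℝ) (hT : 0 < T) (hL : 0 < L) (hε : 0 ≤ ε)
    (Tf : Set (EuclideanSpace ℝ (Fin n)))
    (f g : EuclideanSpace ℝ (Fin n) → EuclideanSpace ℝ (Fin m) → EuclideanSpace ℝ (Fin n))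
    (hfc : Continuous fun p : EuclideanSpace ℝ (Fin n) × EuclideanSpace ℝ (Fin m) =>
      f p.1 p.2)
    (hgc : Continuous fun p : EuclideanSpace ℝ (Fin n) × EuclideanSpace ℝ (Fin m) =>
      g p.1 p.2)
    (hfLip : ∀ (x y : EuclideanSpace ℝ (Fin n)) (u : EuclideanSpace ℝ (Fin m)),
      ‖f x u - f y u‖ ≤ L * ‖x - y‖)
    (hgLip : ∀ (x y : EuclideanSpace ℝ (Fin n)) (u : EuclideanSpace ℝ (Fin m)),
      ‖g x u - g y u‖ ≤ L * ‖x - y‖)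
    (hfg : ∀ (x : EuclideanSpace ℝ (Fin n)), ∀ u ∈ U, ‖f x u - g x u‖ ≤ ε) :
    Metric.hausdorffDist (ctrlDomainWithin n m U T Tf f) (ctrlDomainWithin n m U T Tf g) ≤
      ε / L * (Real.exp (L * T) - 1) := by
  have hexp : 0 ≤ Real.exp (L * T) - 1 := by
    linarith [Real.add_one_le_exp (L * T), mul_pos hL hT]
  have hgf : ∀ x, ∀ u ∈ U, ‖g x u - f x u‖ ≤ ε := fun x u hu =>
    norm_sub_rev (f x u) _ ▸ hfg x u hu
  exact Metric.hausdorffDist_le_of_mem_dist (by positivity)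
    (fun _ hx => exists_mem_ctrlDomainWithin_dist_le hU hL hε hfc hgc hgLip hfg hx)
    (fun _ hx => exists_mem_ctrlDomainWithin_dist_le hU hL hε hgc hfc hfLip hgf hx)

/-- The Hausdorff distance between the controllable domains in time `≤ T` of two dynamics
that are `L`-Lipschitz in the state (uniformly in the control) and `ε`-close on `ℝⁿ × U`
is at most `(ε / L)(e^{L T} - 1)`. -/
theorem hausdorffDist_ctrlDomain_le {n m : ℕ} (U : Set (EuclideanSpace ℝ (Fin m)))
    (hU : IsCompact U) (T L ε : ℝ) (hT : 0 < T) (hL : 0 < L) (hε : 0 ≤ ε)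
    (Tf : Set (EuclideanSpace ℝ (Fin n))) (hTf : Tf.Nonempty)
    (f g : EuclideanSpace ℝ (Fin n) → EuclideanSpace ℝ (Fin m) → EuclideanSpace ℝ (Fin n))
    (hfc : Continuous fun p : EuclideanSpace ℝ (Fin n) × EuclideanSpace ℝ (Fin m) =>
      f p.1 p.2)
    (hgc : Continuous fun p : EuclideanSpace ℝ (Fin n) × EuclideanSpace ℝ (Fin m) =>
      g p.1 p.2)
    (hfLip : ∀ (x y : EuclideanSpace ℝ (Fin n)) (u : EuclideanSpace ℝ (Fin m)),
      ‖f x u - f y u‖ ≤ L * ‖x - y‖)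
    (hgLip : ∀ (x y : EuclideanSpace ℝ (Fin n)) (u : EuclideanSpace ℝ (Fin m)),
      ‖g x u - g y u‖ ≤ L * ‖x - y‖)
    (hfg : ∀ (x : EuclideanSpace ℝ (Fin n)), ∀ u ∈ U, ‖f x u - g x u‖ ≤ ε) :
    Metric.hausdorffDist (ctrlDomainWithin n m U T Tf f) (ctrlDomainWithin n m U T Tf g) ≤
      ε / L * (Real.exp (L * T) - 1) :=
  hausdorffDist_ctrlDomain_le_general U hU T L ε hT hL hε Tf f g hfc hgc hfLip hgLip hfg
end

section
/- Let U ⊆ ℝᵐ be a compact set and g : ℝⁿ × ℝᵐ → ℝⁿ a continuous map. For sets T ⊆ Ω ⊆ ℝⁿ, define the controllable domain C(T, Ω) = {x₀ ∈ Ω : ∃ T' ≥ 0, ∃ measurable u : ℝ → U, ∃ continuous X : [0,T'] → ℝⁿ with X(t) = x₀ + ∫₀ᵗ g(X(s), u(s)) ds and X(t) ∈ Ω for all t ∈ [0,T'], and X(T') ∈ T}. Let D₀, …, D_r ⊆ ℝⁿ be closed sets with D_i ∩ D_{i+1} ≠ ∅ for i = 0,…,r−1, let Ω = D₀ ∪ ⋯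 ∪ D_r, let T_f ⊆ D₀, and define recursively τ₀ = T_f and τ_{i+1} = C(τ_i, D_i) ∩ ∂D_i ∩ ∂D_{i+1} for i = 0,…,r−1. Then C(τ₀, D₀) ∪ C(τ₁, D₁) ∪ ⋯ ∪ C(τ_r, D_r) ⊆ C(T_f, Ω). -/
/-! Each `C(τᵢ, Dᵢ)` lies in `C(T_f, Ω)` by induction on `i`:
`τᵢ₊₁ ⊆ C(τᵢ, Dᵢ) ⊆ C(T_f, Ω)`, so `C(τᵢ₊₁, Dᵢ₊₁) ⊆ C(C(T_f, Ω), Ω)`, and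
`C(C(T_f, Ω), Ω) ⊆ C(T_f, Ω)` because trajectories can be concatenated. Continuity of `g` and
compactness of `U` bound the integrand along the concatenated trajectory; the resulting
integrability is what allows splitting its integral at the junction time. -/

open MeasureTheory

/-- The controllable domain `C(Tgt, Ω)` to the target `Tgt` while remaining within `Ω`,
for the controlled dynamic `g` with controls taking values in `U`: the set of points
`x₀ ∈ Ω` from which some trajectory `X(t) = x₀ + ∫₀ᵗ g(X(s), u(s)) ds`, driven by a
measurable control `u` with values in `U`, stays in `Ω` on `[0, T']` and reaches `Tgt`
at some finite time `T' ≥ 0`. -/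
def ctrlDomain (n m : ℕ) (U : Set (EuclideanSpace ℝ (Fin m)))
    (g : EuclideanSpace ℝ (Fin n) → EuclideanSpace ℝ (Fin m) → EuclideanSpace ℝ (Fin n))
    (Tgt Ω : Set (EuclideanSpace ℝ (Fin n))) : Set (EuclideanSpace ℝ (Fin n)) :=
  {x₀ | x₀ ∈ Ω ∧ ∃ T' : ℝ, 0 ≤ T' ∧ ∃ u : ℝ → EuclideanSpace ℝ (Fin m),
    Measurable u ∧ (∀ s, u s ∈ U) ∧
    ∃ X : ℝ → EuclideanSpace ℝ (Fin n), ContinuousOn X (Set.Icc 0 T') ∧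
      (∀ t ∈ Set.Icc (0 : ℝ) T', X t = x₀ + ∫ s in (0 : ℝ)..t, g (X s) (u s)) ∧
      (∀ t ∈ Set.Icc (0 : ℝ) T', X t ∈ Ω) ∧
      X T' ∈ Tgt}

noncomputable def concatAt {α : Type*} (T₁ : ℝ) (f₁ f₂ : ℝ → α) : ℝ → α :=
  fun t => if t ≤ T₁ then f₁ t else f₂ (t - T₁)

section ConcatAt

variable {α : Type*} {T₁ T₂ : ℝ} {f₁ f₂ : ℝ → α}

lemma concatAt_of_le {t : ℝ} (ht : t ≤ T₁) : concatAt T₁ f₁ f₂ t = f₁ t := if_pos ht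

lemma concatAt_of_lt {t : ℝ} (ht : T₁ < t) : concatAt T₁ f₁ f₂ t = f₂ (t - T₁) :=
  if_neg ht.not_ge

lemma concatAt_of_ge (h : f₂ 0 = f₁ T₁) {t : ℝ} (ht : T₁ ≤ t) :
    concatAt T₁ f₁ f₂ t = f₂ (t - T₁) := by
  rcases ht.eq_or_lt with rfl | ht
  · rw [concatAt_of_le le_rfl, sub_self, h]
  · exact concatAt_of_lt ht

lemma concatAt_map₂ {β γ : Type*} (g : α → β → γ) (u₁ u₂ : ℝ → β) :
    (fun s => g (concatAt T₁ f₁ f₂ s) (concatAt T₁ u₁ u₂ s)) =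
      concatAt T₁ (fun s => g (f₁ s) (u₁ s)) (fun s => g (f₂ s) (u₂ s)) := by
  funext s
  unfold concatAt
  split_ifs <;> rfl

lemma measurable_concatAt [MeasurableSpace α] (h₁ : Measurable f₁) (h₂ : Measurable f₂) :
    Measurable (concatAt T₁ f₁ f₂) :=
  Measurable.ite measurableSet_Iic h₁ (h₂.comp (measurable_id.sub_const T₁))

lemma sub_mem_Icc_of_mem_Icc {t : ℝ} (hT₁ : T₁ ≤ t) (ht : t ∈ Set.Icc 0 (T₁ + T₂)) :
    t - T₁ ∈ Set.Icc 0 T₂ :=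
  ⟨sub_nonneg.mpr hT₁, by linarith [ht.2]⟩

lemma mapsTo_concatAt {S : Set α} (h₁ : Set.MapsTo f₁ (Set.Icc 0 T₁) S)
    (h₂ : Set.MapsTo f₂ (Set.Icc 0 T₂) S) :
    Set.MapsTo (concatAt T₁ f₁ f₂) (Set.Icc 0 (T₁ + T₂)) S := by
  intro t ht
  rcases le_or_gt t T₁ with htT | htT
  · rw [concatAt_of_le htT]
    exact h₁ ⟨ht.1, htT⟩
  · rw [concatAt_of_lt htT]
    exact h₂ (sub_mem_Icc_of_mem_Icc htT.le ht)

lemma continuousOn_concatAt [TopologicalSpace α] (hT₁ : 0 ≤ T₁) (hT₂ : 0 ≤ T₂)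
    (h₁ : ContinuousOn f₁ (Set.Icc 0 T₁)) (h₂ : ContinuousOn f₂ (Set.Icc 0 T₂))
    (h : f₂ 0 = f₁ T₁) :
    ContinuousOn (concatAt T₁ f₁ f₂) (Set.Icc 0 (T₁ + T₂)) := by
  have hleft : ContinuousOn (concatAt T₁ f₁ f₂) (Set.Icc 0 T₁) :=
    h₁.congr fun t ht => concatAt_of_le ht.2
  have hright : ContinuousOn (concatAt T₁ f₁ f₂) (Set.Icc T₁ (T₁ + T₂)) := by
    refine (h₂.comp (continuous_sub_right T₁).continuousOn fun t ht => ?_).congr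
      fun t ht => concatAt_of_ge h ht.1
    exact ⟨sub_nonneg.mpr ht.1, by linarith [ht.2]⟩
  rw [← Set.Icc_union_Icc_eq_Icc hT₁ (le_add_of_nonneg_right hT₂)]
  exact hleft.union_of_isClosed hright isClosed_Icc isClosed_Icc

variable {E : Type*} [NormedAddCommGroup E] [NormedSpace ℝ E] {h₁ h₂ : ℝ → E}

lemma integral_concatAt_of_le {t : ℝ} (ht : 0 ≤ t) (htT : t ≤ T₁) :
    ∫ s in (0 : ℝ)..t, concatAt T₁ h₁ h₂ s = ∫ s in (0 : ℝ)..t, h₁ s := by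
  refine intervalIntegral.integral_congr_ae (Filter.Eventually.of_forall fun s hs => ?_)
  rw [Set.uIoc_of_le ht] at hs
  exact concatAt_of_le (hs.2.trans htT)

lemma integral_concatAt_of_ge {t : ℝ} (hT₁ : 0 ≤ T₁) (htT : T₁ ≤ t)
    (hint : IntervalIntegrable (concatAt T₁ h₁ h₂) volume 0 t) :
    ∫ s in (0 : ℝ)..t, concatAt T₁ h₁ h₂ s =
      (∫ s in (0 : ℝ)..T₁, h₁ s) + ∫ s in (0 : ℝ)..(t - T₁), h₂ s := by
  have hsplit := intervalIntegral.integral_add_adjacent_intervals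
    (hint.mono_set (Set.uIcc_subset_uIcc_left (Set.mem_uIcc_of_le hT₁ htT)))
    (hint.mono_set (Set.uIcc_subset_uIcc_right (Set.mem_uIcc_of_le hT₁ htT)))
  have hright :
      ∫ s in T₁..t, concatAt T₁ h₁ h₂ s = ∫ s in T₁..t, h₂ (s - T₁) := by
    refine intervalIntegral.integral_congr_ae (Filter.Eventually.of_forall fun s hs => ?_)
    rw [Set.uIoc_of_le htT] at hs
    exact concatAt_of_lt hs.1
  rw [← hsplit, integral_concatAt_of_le hT₁ le_rfl, hright,
    intervalIntegral.integral_comp_sub_right, sub_self]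

lemma concatAt_eq_add_integral_concatAt {x₀ : E} {X₁ X₂ : ℝ → E} (hT₁ : 0 ≤ T₁)
    (hX₁ : ∀ t ∈ Set.Icc 0 T₁, X₁ t = x₀ + ∫ s in (0 : ℝ)..t, h₁ s)
    (hX₂ : ∀ t ∈ Set.Icc 0 T₂, X₂ t = X₁ T₁ + ∫ s in (0 : ℝ)..t, h₂ s)
    (hint : IntegrableOn (concatAt T₁ h₁ h₂) (Set.Icc 0 (T₁ + T₂))) :
    ∀ t ∈ Set.Icc 0 (T₁ + T₂),
      concatAt T₁ X₁ X₂ t = x₀ + ∫ s in (0 : ℝ)..t, concatAt T₁ h₁ h₂ s := by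
  intro t ht
  rcases le_or_gt t T₁ with htT | htT
  · rw [concatAt_of_le htT, integral_concatAt_of_le ht.1 htT, hX₁ t ⟨ht.1, htT⟩]
  · have hint' : IntervalIntegrable (concatAt T₁ h₁ h₂) volume 0 t :=
      (hint.mono_set (Set.uIcc_subset_Icc ⟨le_rfl, ht.1.trans ht.2⟩ ht)).intervalIntegrable
    rw [concatAt_of_lt htT, integral_concatAt_of_ge hT₁ htT.le hint',
      hX₂ _ (sub_mem_Icc_of_mem_Icc htT.le ht), hX₁ T₁ ⟨hT₁, le_rfl⟩, add_assoc]

end ConcatAt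

lemma integrableOn_comp_of_isCompact {E F G : Type*} [NormedAddCommGroup E]
    [NormedAddCommGroup F] [NormedAddCommGroup G] {g : E → F → G}
    (hg : Continuous fun p : E × F => g p.1 p.2) {U : Set F} (hU : IsCompact U)
    {μ : Measure ℝ} [IsFiniteMeasureOnCompacts μ] {a b : ℝ} {X : ℝ → E} {u : ℝ → F}
    (hX : ContinuousOn X (Set.Icc a b)) (hu : AEStronglyMeasurable u μ)
    (huU : ∀ s, u s ∈ U) :
    IntegrableOn (fun s => g (X s) (u s)) (Set.Icc a b) μ := by
  have hK : IsCompact ((fun p : E × F => g p.1 p.2) '' ((X '' Set.Icc a b) ×ˢ U)) :=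
    ((isCompact_Icc.image_of_continuousOn hX).prod hU).image hg
  obtain ⟨C, hC⟩ := hK.isBounded.exists_norm_le
  refine ⟨hg.comp_aestronglyMeasurable
    ((hX.aestronglyMeasurable measurableSet_Icc).prodMk hu.restrict),
    .restrict_of_bounded (C := C) isCompact_Icc.measure_lt_top ?_⟩
  filter_upwards [ae_restrict_mem measurableSet_Icc] with s hs
  exact hC _ ⟨(X s, u s), ⟨⟨s, hs, rfl⟩, huU s⟩, rfl⟩

section ctrlDomain

variable {n m : ℕ} {U : Set (EuclideanSpace ℝ (Fin m))}
  {g : EuclideanSpace ℝ (Fin n) → EuclideanSpace ℝ (Fin m) → EuclideanSpace ℝ (Fin n)}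

lemma ctrlDomain_mono {T₁ T₂ Ω₁ Ω₂ : Set (EuclideanSpace ℝ (Fin n))} (hT : T₁ ⊆ T₂)
    (hΩ : Ω₁ ⊆ Ω₂) : ctrlDomain n m U g T₁ Ω₁ ⊆ ctrlDomain n m U g T₂ Ω₂ := by
  rintro x ⟨hx, T', hT', u, hu, huU, X, hXc, hXeq, hXΩ, hXT⟩
  exact ⟨hΩ hx, T', hT', u, hu, huU, X, hXc, hXeq, fun t ht => hΩ (hXΩ t ht), hT hXT⟩

lemma ctrlDomain_ctrlDomain_subset (hU : IsCompact U)
    (hg : Continuous fun p : EuclideanSpace ℝ (Fin n) × EuclideanSpace ℝ (Fin m) => g p.1 p.2)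
    {Tgt Ω : Set (EuclideanSpace ℝ (Fin n))} :
    ctrlDomain n m U g (ctrlDomain n m U g Tgt Ω) Ω ⊆ ctrlDomain n m U g Tgt Ω := by
  rintro x₀ ⟨hx₀, T₁, hT₁, u₁, hu₁, hu₁U, X₁, hX₁c, hX₁eq, hX₁Ω, -, T₂, hT₂, u₂, hu₂, hu₂U,
    X₂, hX₂c, hX₂eq, hX₂Ω, hX₂T⟩
  have hX₂0 : X₂ 0 = X₁ T₁ := by simpa using hX₂eq 0 ⟨le_rfl, hT₂⟩
  have hu : Measurable (concatAt T₁ u₁ u₂) := measurable_concatAt hu₁ hu₂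
  have huU : ∀ s, concatAt T₁ u₁ u₂ s ∈ U := fun s => by
    unfold concatAt; split_ifs
    exacts [hu₁U s, hu₂U _]
  have hXc : ContinuousOn (concatAt T₁ X₁ X₂) (Set.Icc 0 (T₁ + T₂)) :=
    continuousOn_concatAt hT₁ hT₂ hX₁c hX₂c hX₂0
  have hint :=
    integrableOn_comp_of_isCompact hg hU hXc (μ := volume) hu.aestronglyMeasurable huU
  rw [concatAt_map₂] at hint
  refine ⟨hx₀, T₁ + T₂, add_nonneg hT₁ hT₂, concatAt T₁ u₁ u₂, hu, huU, concatAt T₁ X₁ X₂,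
    hXc, ?_, mapsTo_concatAt hX₁Ω hX₂Ω, ?_⟩
  · rw [concatAt_map₂]
    exact concatAt_eq_add_integral_concatAt hT₁ hX₁eq hX₂eq hint
  · rwa [concatAt_of_ge hX₂0 (le_add_of_nonneg_right hT₂), add_sub_cancel_left]

end ctrlDomain

theorem local_ctrlDomains_subset_global_general {n m : ℕ} (U : Set (EuclideanSpace ℝ (Fin m)))
    (hU : IsCompact U)
    (g : EuclideanSpace ℝ (Fin n) → EuclideanSpace ℝ (Fin m) → EuclideanSpace ℝ (Fin n))
    (hgc : Continuous fun p : EuclideanSpace ℝ (Fin n) × EuclideanSpace ℝ (Fin m) =>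
      g p.1 p.2)
    (r : ℕ) (D : ℕ → Set (EuclideanSpace ℝ (Fin n)))
    (Ω : Set (EuclideanSpace ℝ (Fin n))) (hΩ : Ω = ⋃ i ∈ Set.Iic r, D i)
    (Tf : Set (EuclideanSpace ℝ (Fin n)))
    (τ : ℕ → Set (EuclideanSpace ℝ (Fin n)))
    (hτ0 : τ 0 = Tf)
    (hτ : ∀ i < r, τ (i + 1) =
      ctrlDomain n m U g (τ i) (D i) ∩ frontier (D i) ∩ frontier (D (i + 1))) :
    (⋃ i ∈ Set.Iic r, ctrlDomain n m U g (τ i) (D i)) ⊆ ctrlDomain n m U g Tf Ω := by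
  have hDΩ : ∀ i ≤ r, D i ⊆ Ω := fun i hi => hΩ ▸ Set.subset_biUnion_of_mem (u := D) hi
  refine Set.iUnion₂_subset fun i => ?_
  induction i with
  | zero =>
    intro h0
    rw [hτ0]
    exact ctrlDomain_mono subset_rfl (hDΩ 0 h0)
  | succ i ih =>
    intro hi
    have hτi : τ (i + 1) ⊆ ctrlDomain n m U g Tf Ω := by
      rw [hτ i hi]
      exact fun x hx => ih (Nat.le_of_succ_le hi) hx.1.1
    exact (ctrlDomain_mono hτi (hDΩ _ hi)).trans (ctrlDomain_ctrlDomain_subset hU hgc)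

/-- Propagation of local controllable domains along a path of adjacent cells: the union of
the local controllable domains `C(τᵢ, Dᵢ)`, with targets recursively defined by
`τ₀ = T_f` and `τ_{i+1} = C(τᵢ, Dᵢ) ∩ ∂Dᵢ ∩ ∂D_{i+1}`, is contained in the controllable
domain `C(T_f, Ω)` inside `Ω = D₀ ∪ ⋯ ∪ D_r`. -/
theorem local_ctrlDomains_subset_global {n m : ℕ} (U : Set (EuclideanSpace ℝ (Fin m)))
    (hU : IsCompact U)
    (g : EuclideanSpace ℝ (Fin n) → EuclideanSpace ℝ (Fin m) → EuclideanSpace ℝ (Fin n))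
    (hgc : Continuous fun p : EuclideanSpace ℝ (Fin n) × EuclideanSpace ℝ (Fin m) =>
      g p.1 p.2)
    (r : ℕ) (D : ℕ → Set (EuclideanSpace ℝ (Fin n)))
    (hDclosed : ∀ i ≤ r, IsClosed (D i))
    (hadj : ∀ i < r, (D i ∩ D (i + 1)).Nonempty)
    (Ω : Set (EuclideanSpace ℝ (Fin n))) (hΩ : Ω = ⋃ i ∈ Set.Iic r, D i)
    (Tf : Set (EuclideanSpace ℝ (Fin n))) (hTf : Tf ⊆ D 0)
    (τ : ℕ → Set (EuclideanSpace ℝ (Fin n)))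
    (hτ0 : τ 0 = Tf)
    (hτ : ∀ i < r, τ (i + 1) =
      ctrlDomain n m U g (τ i) (D i) ∩ frontier (D i) ∩ frontier (D (i + 1))) :
    (⋃ i ∈ Set.Iic r, ctrlDomain n m U g (τ i) (D i)) ⊆ ctrlDomain n m U g Tf Ω :=
  local_ctrlDomains_subset_global_general U hU g hgc r D Ω hΩ Tf τ hτ0 hτ
end
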